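/- Let f₊, f₋ : ℝ → ℝ be three times continuously differentiable, let ε > 0 and u ∈ ℝ satisfy f₊'(u+ε) − f₋'(u−ε) − 2ε·f₊''(u+ε) = 0 and f₊''(u+ε) − f₋''(u−ε) − 2ε·f₊'''(u+ε) ≠ 0, and set κ = 2f₊'''(u+ε) / (f₊''(u+ε) − f₋''(u−ε) − 2ε·f₊'''(u+ε)). Define the three functions of (x₁,x₂): X₀ = f₋'(x₁−x₂) − f₊'(x₁+x₂) − (ε−x₂)f₋''(x₁−x₂) + (ε+x₂)f₊''(x₁+x₂); X₁ = f₊'(x₁+x₂) − f₋'(x₁−x₂) − 2x₂·f₊''(x₁+x₂); X∞ = ε(f₊'(x₁+x₂) − f₋'(x₁−x₂)) − x₂(ε−x₂)f₋''(x₁−x₂) − x₂(ε+x₂)f₊''(x₁+x₂). Then, provided the respective denominators are nonzero, the implicit slopes −(∂Xᵢ/∂x₁)/(∂Xᵢ/∂x₂) evaluated at the point (u,ε) equal: 1/(εκ) for X₀, 1/(1+2εκ) for X₁, and 1/(2+3εκ) for X∞. -/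

import Mathlib

/-- The curve `X₀` (where integral curves have slope `0`). In each `Xᵢ` the
arguments of `f₊` and its derivatives are `x₁+x₂`, those of `f₋` are `x₁−x₂`. -/
noncomputable def X0 (fp fm : ℝ → ℝ) (ε : ℝ) (x : ℝ × ℝ) : ℝ :=
  deriv fm (x.1 - x.2) - deriv fp (x.1 + x.2) -
    (ε - x.2) * deriv (deriv fm) (x.1 - x.2) +
    (ε + x.2) * deriv (deriv fp) (x.1 + x.2)

/-- The curve `X₁` (where integral curves have slope `1`). -/
noncomputable def X1 (fp fm : ℝ → ℝ) (x : ℝ × ℝ) : ℝ :=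
  deriv fp (x.1 + x.2) - deriv fm (x.1 - x.2) -
    2 * x.2 * deriv (deriv fp) (x.1 + x.2)

/-- The curve `X∞` (where integral curves have slope `∞`). -/
noncomputable def Xinf (fp fm : ℝ → ℝ) (ε : ℝ) (x : ℝ × ℝ) : ℝ :=
  ε * (deriv fp (x.1 + x.2) - deriv fm (x.1 - x.2)) -
    x.2 * (ε - x.2) * deriv (deriv fm) (x.1 - x.2) -
    x.2 * (ε + x.2) * deriv (deriv fp) (x.1 + x.2)

/-- the implicit slopes `−(∂Xᵢ/∂x₁)/(∂Xᵢ/∂x₂)` at the stationary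
point `(u,ε)` equal `1/(εκ)`, `1/(1+2εκ)` and `1/(2+3εκ)` respectively. -/
theorem stmt_3 (fp fm : ℝ → ℝ)
    (hfp : ContDiff ℝ 3 fp) (hfm : ContDiff ℝ 3 fm)
    (ε u : ℝ) (hε : 0 < ε)
    (hroot : deriv fp (u + ε) - deriv fm (u - ε) -
      2 * ε * deriv (deriv fp) (u + ε) = 0)
    (hden : deriv (deriv fp) (u + ε) - deriv (deriv fm) (u - ε) -
      2 * ε * deriv (deriv (deriv fp)) (u + ε) ≠ 0)
    (κ : ℝ)
    (hκ : κ = 2 * deriv (deriv (deriv fp)) (u + ε) /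
      (deriv (deriv fp) (u + ε) - deriv (deriv fm) (u - ε) -
        2 * ε * deriv (deriv (deriv fp)) (u + ε))) :
    (fderiv ℝ (X0 fp fm ε) (u, ε) (0, 1) ≠ 0 → ε * κ ≠ 0 →
      -(fderiv ℝ (X0 fp fm ε) (u, ε) (1, 0)) /
        fderiv ℝ (X0 fp fm ε) (u, ε) (0, 1) = 1 / (ε * κ)) ∧
    (fderiv ℝ (X1 fp fm) (u, ε) (0, 1) ≠ 0 → 1 + 2 * ε * κ ≠ 0 →
      -(fderiv ℝ (X1 fp fm) (u, ε) (1, 0)) /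
        fderiv ℝ (X1 fp fm) (u, ε) (0, 1) = 1 / (1 + 2 * ε * κ)) ∧
    (fderiv ℝ (Xinf fp fm ε) (u, ε) (0, 1) ≠ 0 → 2 + 3 * ε * κ ≠ 0 →
      -(fderiv ℝ (Xinf fp fm ε) (u, ε) (1, 0)) /
        fderiv ℝ (Xinf fp fm ε) (u, ε) (0, 1) = 1 / (2 + 3 * ε * κ)) := by
  -- Derivative facts for the 1D functions
  have h2p : ContDiff ℝ 2 (deriv fp) :=
    (contDiff_succ_iff_deriv.mp (show ContDiff ℝ (2+1) fp by norm_num [hfp])).2.2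
  have h1p : ContDiff ℝ 1 (deriv (deriv fp)) :=
    (contDiff_succ_iff_deriv.mp (show ContDiff ℝ (1+1) (deriv fp) by norm_num [h2p])).2.2
  have h2m : ContDiff ℝ 2 (deriv fm) :=
    (contDiff_succ_iff_deriv.mp (show ContDiff ℝ (2+1) fm by norm_num [hfm])).2.2
  have h1m : ContDiff ℝ 1 (deriv (deriv fm)) :=
    (contDiff_succ_iff_deriv.mp (show ContDiff ℝ (1+1) (deriv fm) by norm_num [h2m])).2.2
  set p2 := deriv (deriv fp) (u + ε) with hp2def
  set p3 := deriv (deriv (deriv fp)) (u + ε) with hp3def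
  set m2 := deriv (deriv fm) (u - ε) with hm2def
  set m3 := deriv (deriv (deriv fm)) (u - ε) with hm3def
  have Hp1 : HasDerivAt (deriv fp) p2 (u + ε) :=
    ((h2p.differentiable two_ne_zero) (u + ε)).hasDerivAt
  have Hp2 : HasDerivAt (deriv (deriv fp)) p3 (u + ε) :=
    ((h1p.differentiable one_ne_zero) (u + ε)).hasDerivAt
  have Hm1 : HasDerivAt (deriv fm) m2 (u - ε) :=
    ((h2m.differentiable two_ne_zero) (u - ε)).hasDerivAt
  have Hm2 : HasDerivAt (deriv (deriv fm)) m3 (u - ε) :=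
    ((h1m.differentiable one_ne_zero) (u - ε)).hasDerivAt
  -- Linear parts
  have hs : HasFDerivAt (fun x : ℝ × ℝ => x.1 + x.2)
      (ContinuousLinearMap.fst ℝ ℝ ℝ + ContinuousLinearMap.snd ℝ ℝ ℝ) (u, ε) :=
    (hasFDerivAt_fst).add (hasFDerivAt_snd)
  have hd : HasFDerivAt (fun x : ℝ × ℝ => x.1 - x.2)
      (ContinuousLinearMap.fst ℝ ℝ ℝ - ContinuousLinearMap.snd ℝ ℝ ℝ) (u, ε) :=
    (hasFDerivAt_fst).sub (hasFDerivAt_snd)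
  -- Compositions
  have hA : HasFDerivAt (fun x : ℝ × ℝ => deriv fp (x.1 + x.2))
      (p2 • (ContinuousLinearMap.fst ℝ ℝ ℝ + ContinuousLinearMap.snd ℝ ℝ ℝ)) (u, ε) :=
    by have := Hp1.comp_hasFDerivAt (u, ε) hs; exact this
  have hB : HasFDerivAt (fun x : ℝ × ℝ => deriv fm (x.1 - x.2))
      (m2 • (ContinuousLinearMap.fst ℝ ℝ ℝ - ContinuousLinearMap.snd ℝ ℝ ℝ)) (u, ε) :=
    by have := Hm1.comp_hasFDerivAt (u, ε) hd; exact this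
  have hC : HasFDerivAt (fun x : ℝ × ℝ => deriv (deriv fp) (x.1 + x.2))
      (p3 • (ContinuousLinearMap.fst ℝ ℝ ℝ + ContinuousLinearMap.snd ℝ ℝ ℝ)) (u, ε) :=
    by have := Hp2.comp_hasFDerivAt (u, ε) hs; exact this
  have hD : HasFDerivAt (fun x : ℝ × ℝ => deriv (deriv fm) (x.1 - x.2))
      (m3 • (ContinuousLinearMap.fst ℝ ℝ ℝ - ContinuousLinearMap.snd ℝ ℝ ℝ)) (u, ε) :=
    by have := Hm2.comp_hasFDerivAt (u, ε) hd; exact this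
  have hE : HasFDerivAt (fun x : ℝ × ℝ => ε - x.2)
      (0 - ContinuousLinearMap.snd ℝ ℝ ℝ) (u, ε) :=
    (hasFDerivAt_const ε (u, ε)).sub hasFDerivAt_snd
  have hF : HasFDerivAt (fun x : ℝ × ℝ => ε + x.2)
      (0 + ContinuousLinearMap.snd ℝ ℝ ℝ) (u, ε) :=
    (hasFDerivAt_const ε (u, ε)).add hasFDerivAt_snd
  have hG : HasFDerivAt (fun x : ℝ × ℝ => 2 * x.2)
      ((2 : ℝ) • ContinuousLinearMap.snd ℝ ℝ ℝ + ε • (0 : ℝ × ℝ →L[ℝ] ℝ)) (u, ε) :=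
    (hasFDerivAt_const (2 : ℝ) (u, ε)).mul hasFDerivAt_snd
  have hsnd : HasFDerivAt (fun x : ℝ × ℝ => x.2) (ContinuousLinearMap.snd ℝ ℝ ℝ) (u, ε) :=
    hasFDerivAt_snd
  -- X0
  have hX0 : HasFDerivAt (X0 fp fm ε) _ (u, ε) := ((hB.sub hA).sub (hE.mul hD)).add (hF.mul hC)
  -- X1
  have hX1 : HasFDerivAt (X1 fp fm) _ (u, ε) := (hA.sub hB).sub (hG.mul hC)
  -- Xinf
  have hXinf : HasFDerivAt (Xinf fp fm ε) _ (u, ε) :=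
    ((((hasFDerivAt_const ε (u, ε)).mul (hA.sub hB))).sub ((hsnd.mul hE).mul hD)).sub
      ((hsnd.mul hF).mul hC)
  set D := p2 - m2 - 2 * ε * p3 with hDdef
  have hκD : κ * D = 2 * p3 := by rw [hκ, div_mul_cancel₀ _ hden]
  have hε0 : ε ≠ 0 := ne_of_gt hε
  have v0a : fderiv ℝ (X0 fp fm ε) (u, ε) (1, 0) = -D := by
    rw [hX0.fderiv]; simp; try ring
  have v0b : fderiv ℝ (X0 fp fm ε) (u, ε) (0, 1) = 2 * ε * p3 := by
    rw [hX0.fderiv]; simp; try ring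
  have v1a : fderiv ℝ (X1 fp fm) (u, ε) (1, 0) = D := by
    rw [hX1.fderiv]; simp; try ring
  have v1b : fderiv ℝ (X1 fp fm) (u, ε) (0, 1) = -D - 4 * ε * p3 := by
    rw [hX1.fderiv]; simp; try ring
  have via_ : fderiv ℝ (Xinf fp fm ε) (u, ε) (1, 0) = ε * D := by
    rw [hXinf.fderiv]; simp; try ring
  have vib : fderiv ℝ (Xinf fp fm ε) (u, ε) (0, 1) = -(2 * ε * D + 6 * ε * ε * p3) := by
    rw [hXinf.fderiv]; simp; try ring
  refine ⟨?_, ?_, ?_⟩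
  · intro h1 h2
    rw [v0a, v0b]
    have h4 : 2 * ε * p3 = D * (ε * κ) := by linear_combination (-ε) * hκD
    rw [h4, neg_neg, div_mul_eq_div_div, div_self hden]
  · intro h1 h2
    rw [v1a, v1b]
    have h4 : -D - 4 * ε * p3 = -(D * (1 + 2 * ε * κ)) := by
      linear_combination (2 * ε) * hκD
    rw [h4, neg_div_neg_eq, div_mul_eq_div_div, div_self hden]
  · intro h1 h2
    rw [via_, vib]
    have h4 : -(2 * ε * D + 6 * ε * ε * p3) = -((ε * D) * (2 + 3 * ε * κ)) := by
      linear_combination (3 * ε * ε) * hκD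
    have hεD : ε * D ≠ 0 := mul_ne_zero hε0 hden
    rw [h4, neg_div_neg_eq, div_mul_eq_div_div, div_self hεD]
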